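/- The subsynchronizing judgment is upward closed in its client type: if A ≤ B ≤ C where A, B, and C all have the same modality (all linear or all shared) and ssync(A, B, D̂) holds, then ssync(A, C, D̂) holds. -/
import Mathlib


/-! # Session types of SILL_S≤ -/

abbrev Label := String

/-- Session-type syntax (shared and linear constructors in one grammar).
Choices are represented by a label set together with a branch function. -/
inductive STy : Type
  | one : STy
  | tensor : STy → STy → STy
  | lolli : STy → STy → STy
  | ichoice : Set Label → (Label → STy) → STy
  | echoice : Set Label → (Label → STy) → STy
  | upS : STy → STy      -- ↑ˢ_L  (shared type)
  | downS : STy → STy    -- ↓ˢ_L  (linear type with shared continuation)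
  | upL : STy → STy      -- ↑ᴸ_L
  | downL : STy → STy    -- ↓ᴸ_L

mutual
  /-- `A` is a (well-formed) shared session type. -/
  inductive IsShared : STy → Prop
    | upS {A} : IsLinear A → IsShared (.upS A)
  /-- `A` is a (well-formed) linear session type. -/
  inductive IsLinear : STy → Prop
    | one : IsLinear .one
    | tensor {A B} : IsLinear A → IsLinear B → IsLinear (.tensor A B)
    | lolli {A B} : IsLinear A → IsLinear B → IsLinear (.lolli A B)
    | ichoice {L f} : (∀ l ∈ L, IsLinear (f l)) → IsLinear (.ichoice L f)
    | echoice {L f} : (∀ l ∈ L, IsLinear (f l)) → IsLinear (.echoice L f)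
    | upL {A} : IsLinear A → IsLinear (.upL A)
    | downL {A} : IsLinear A → IsLinear (.downL A)
    | downS {A} : IsShared A → IsLinear (.downS A)
end

/-- The subtyping relation `A ≤ B` on session types. -/
inductive SubT : STy → STy → Prop
  | one : SubT .one .one
  | tensor {A A' B B'} : SubT A A' → SubT B B' → SubT (.tensor A B) (.tensor A' B')
  | lolli {A A' B B'} : SubT A' A → SubT B B' → SubT (.lolli A B) (.lolli A' B')
  | ichoice {L L' f g} : L ⊆ L' → (∀ l ∈ L, SubT (f l) (g l)) →
      SubT (.ichoice L f) (.ichoice L' g)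
  | echoice {L L' f g} : L' ⊆ L → (∀ l ∈ L', SubT (f l) (g l)) →
      SubT (.echoice L f) (.echoice L' g)
  | upS {A B} : SubT A B → SubT (.upS A) (.upS B)
  | downS {A B} : SubT A B → SubT (.downS A) (.downS B)
  | upSL {A B} : SubT A B → SubT (.upS A) (.upL B)
  | downSL {A B} : SubT A B → SubT (.downS A) (.downL B)
  | upL {A B} : SubT A B → SubT (.upL A) (.upL B)
  | downL {A B} : SubT A B → SubT (.downL A) (.downL B)

/-- Extended shared types `Â ::= ⊥ | A_S | ⊤`. -/
inductive ExtS : Type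
  | bot : ExtS
  | ty : STy → ExtS
  | top : ExtS

/-- Subtyping on extended shared types: `⊥ ≤ Â ≤ ⊤`. -/
inductive ExtSub : ExtS → ExtS → Prop
  | bot {Ah} : ExtSub .bot Ah
  | top {Ah} : ExtSub Ah .top
  | ty {A B} : SubT A B → ExtSub (.ty A) (.ty B)

/-- `Â ≤ A` between an extended shared type and a session type. -/
inductive ExtLE : ExtS → STy → Prop
  | bot {A} : ExtLE .bot A
  | ty {B A} : SubT B A → ExtLE (.ty B) A

/-- The subsynchronizing judgment `ssync(A, B, D̂)`. -/
inductive SSync : STy → STy → ExtS → Prop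
  | one {Dh} : SSync .one .one Dh
  | tensor {A A' B B' Dh} : SSync B B' Dh → SSync (.tensor A B) (.tensor A' B') Dh
  | lolli {A A' B B' Dh} : SSync B B' Dh → SSync (.lolli A B) (.lolli A' B') Dh
  | ichoice {L L' f g Dh} : L ⊆ L' → (∀ l ∈ L, SSync (f l) (g l) Dh) →
      SSync (.ichoice L f) (.ichoice L' g) Dh
  | echoice {L L' f g Dh} : L' ⊆ L → (∀ l ∈ L', SSync (f l) (g l) Dh) →
      SSync (.echoice L f) (.echoice L' g) Dh
  | upL {A A' Dh} : SSync A A' Dh → SSync (.upL A) (.upL A') Dh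
  | downL {A A' Dh} : SSync A A' Dh → SSync (.downL A) (.downL A') Dh
  | upS {A A'} : SSync A A' (.ty (.upS A)) → SSync (.upS A) (.upS A') .top
  | downS {A A' Dh} : SSync A A' .top → ExtSub (.ty A) Dh →
      SSync (.downS A) (.downS A') Dh
  | upSL {A A'} : SSync A A' (.ty (.upS A)) → SSync (.upS A) (.upL A') .top
  | downSL {A A' Dh} : SSync A A' .top → ExtSub (.ty A) Dh →
      SSync (.downS A) (.downL A') Dh

/-- The equi-synchronizing judgment: every release happens at exactly the
type at which the protocol was acquired. -/
inductive ESync : STy → ExtS → Prop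
  | one {Dh} : ESync .one Dh
  | tensor {A B Dh} : ESync B Dh → ESync (.tensor A B) Dh
  | lolli {A B Dh} : ESync B Dh → ESync (.lolli A B) Dh
  | ichoice {L f Dh} : (∀ l ∈ L, ESync (f l) Dh) → ESync (.ichoice L f) Dh
  | echoice {L f Dh} : (∀ l ∈ L, ESync (f l) Dh) → ESync (.echoice L f) Dh
  | upL {A Dh} : ESync A Dh → ESync (.upL A) Dh
  | downL {A Dh} : ESync A Dh → ESync (.downL A) Dh
  | upS {A} : ESync A (.ty (.upS A)) → ESync (.upS A) .top
  | downS {A Dh} : ESync A .top → (Dh = .top ∨ Dh = .ty A) → ESync (.downS A) Dh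

/-- A session type is equi-synchronizing when it satisfies the judgment with
the trivial constraint `⊤`. -/
def EquiSync (A : STy) : Prop := ESync A .top

open Classical in
/-- The meet of two session types; `none` plays the role of `⊥`. -/
noncomputable def meetO : STy → STy → Option STy
  | .one, .one => some .one
  | .tensor A B, .tensor A' B' =>
      match meetO A A', meetO B B' with
      | some X, some Y => some (.tensor X Y)
      | _, _ => none
  | .lolli A B, .lolli A' B' =>
      match meetO A A', meetO B B' with
      | some X, some Y => some (.lolli X Y)
      | _, _ => none
  | .echoice L f, .echoice L' g =>
      if ∀ l ∈ L ∩ L', (meetO (f l) (g l)).isSome then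
        some (.echoice (L ∪ L') (fun l =>
          if l ∈ L ∩ L' then (meetO (f l) (g l)).getD .one
          else if l ∈ L then f l else g l))
      else none
  | .ichoice L f, .ichoice L' g =>
      if (L ∩ L').Nonempty ∧ ∀ l ∈ L ∩ L', (meetO (f l) (g l)).isSome then
        some (.ichoice (L ∩ L') (fun l => (meetO (f l) (g l)).getD .one))
      else none
  | .upS A, .upS B => (meetO A B).map .upS
  | .upS A, .upL B => (meetO A B).map .upS
  | .upL A, .upS B => (meetO A B).map .upS
  | .upL A, .upL B => (meetO A B).map .upL
  | .downS A, .downS B => (meetO A B).map .downS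
  | .downS A, .downL B => (meetO A B).map .downS
  | .downL A, .downS B => (meetO A B).map .downS
  | .downL A, .downL B => (meetO A B).map .downL
  | _, _ => none

/-- The meet `Â ∧ B̂` on extended shared types. -/
noncomputable def meetExt : ExtS → ExtS → ExtS
  | .bot, _ => .bot
  | _, .bot => .bot
  | .top, x => x
  | x, .top => x
  | .ty A, .ty B =>
      match meetO A B with
      | some C => .ty C
      | none => .bot

/-- `A`, `B` and `C` are all linear or all shared. -/
def SameModality (A B C : STy) : Prop :=
  (IsLinear A ∧ IsLinear B ∧ IsLinear C) ∨ (IsShared A ∧ IsShared B ∧ IsShared C)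

/-- the subsynchronizing judgment is upward closed in its client
type. -/
theorem ssync_client_up (A B C : STy) (Dh : ExtS)
    (hmod : SameModality A B C) (hAB : SubT A B) (hBC : SubT B C)
    (h : SSync A B Dh) : SSync A C Dh := by
  clear hmod hAB
  induction h generalizing C with
  | one => cases hBC; exact .one
  | tensor _ ih => cases hBC with
    | tensor h1 h2 => exact .tensor (ih _ h2)
  | lolli _ ih => cases hBC with
    | lolli h1 h2 => exact .lolli (ih _ h2)
  | ichoice hsub _ ih => cases hBC with
    | ichoice hsub2 hf =>
      exact .ichoice (hsub.trans hsub2) (fun l hl => ih l hl _ (hf l (hsub hl)))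
  | echoice hsub _ ih => cases hBC with
    | echoice hsub2 hf =>
      exact .echoice (hsub2.trans hsub) (fun l hl => ih l (hsub2 hl) _ (hf l hl))
  | upL _ ih => cases hBC with
    | upL h1 => exact .upL (ih _ h1)
  | downL _ ih => cases hBC with
    | downL h1 => exact .downL (ih _ h1)
  | upS _ ih => cases hBC with
    | upS h1 => exact .upS (ih _ h1)
    | upSL h1 => exact .upSL (ih _ h1)
  | downS _ hle ih => cases hBC with
    | downS h1 => exact .downS (ih _ h1) hle
    | downSL h1 => exact .downSL (ih _ h1) hle
  | upSL _ ih => cases hBC with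
    | upL h1 => exact .upSL (ih _ h1)
  | downSL _ hle ih => cases hBC with
    | downL h1 => exact .downSL (ih _ h1) hle
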